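/- arXiv:math/9906214 — 4 statements merged into one kernel-verified Lean document; each statement's English description precedes it below -/
import Mathlib

section
/- For an odd prime p, every nonzero complex zero of the Fekete polynomial f_p lies in the annulus 1/2 < |t| < 2. -/
/-!
Every coefficient of `f_p` has absolute value at most `1`, the leading coefficient (of `t^(p-1)`)
is `±1` and the lowest nonzero one (of `t`) is `1`. So Cauchy's bound `1 + max |cᵢ / c_top|`
is at most `2` for `f_p`, and also for its reversal, whose roots are the inverses of the nonzero
roots of `f_p`.
-/

open Finset

namespace Polynomial

section NormedDivisionRing

variable {K : Type*} [NormedDivisionRing K]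

lemma cauchyBound_le_two {q : K[X]} (h : ∀ i, ‖q.coeff i‖ ≤ ‖q.leadingCoeff‖) :
    cauchyBound q ≤ 2 := by
  have : (range q.natDegree).sup (‖q.coeff ·‖₊) / ‖q.leadingCoeff‖₊ ≤ 1 :=
    div_le_one_of_le₀ (Finset.sup_le fun i _ => h i) zero_le
  calc cauchyBound q ≤ 1 + 1 := add_le_add_left this 1
    _ = 2 := one_add_one_eq_two

theorem IsRoot.norm_lt_two {q : K[X]} (hq : q ≠ 0)
    (h : ∀ i, ‖q.coeff i‖ ≤ ‖q.leadingCoeff‖) {a : K} (ha : q.IsRoot a) : ‖a‖ < 2 := by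
  exact_mod_cast (ha.norm_lt_cauchyBound hq).trans_le (cauchyBound_le_two h)

end NormedDivisionRing

theorem IsRoot.one_half_lt_norm {K : Type*} [NormedField K] {q : K[X]} (hq : q ≠ 0)
    (h : ∀ i, ‖q.coeff i‖ ≤ ‖q.trailingCoeff‖) {a : K} (ha0 : a ≠ 0) (ha : q.IsRoot a) :
    1 / 2 < ‖a‖ := by
  let _ := invertibleOfNonzero ha0
  have hrev : q.reverse.IsRoot a⁻¹ := by
    have := (eval₂_reverse_eq_zero_iff (RingHom.id K) a q).mpr ha
    rwa [invOf_eq_inv] at this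
  have hcoeff : ∀ i, ‖q.reverse.coeff i‖ ≤ ‖q.reverse.leadingCoeff‖ := fun i => by
    rw [coeff_reverse, reverse_leadingCoeff]
    exact h _
  have := hrev.norm_lt_two (reverse_eq_zero.not.mpr hq) hcoeff
  rw [norm_inv] at this
  rw [one_div]
  exact (inv_lt_comm₀ (norm_pos_iff.mpr ha0) two_pos).mp this

end Polynomial

open Polynomial

noncomputable def feketePolynomial (p : ℕ) [Fact p.Prime] : ℂ[X] :=
  ∑ a ∈ range p, C (legendreSym p a : ℂ) * X ^ a

section Fekete

variable (p : ℕ) [Fact p.Prime]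

lemma norm_legendreSym_of_ne_zero {a : ℤ} (ha : (a : ZMod p) ≠ 0) :
    ‖(legendreSym p a : ℂ)‖ = 1 := by
  rcases legendreSym.eq_one_or_neg_one p ha with h | h <;> simp [h]

lemma norm_legendreSym_le_one (a : ℤ) : ‖(legendreSym p a : ℂ)‖ ≤ 1 := by
  by_cases ha : (a : ZMod p) = 0
  · simp [(legendreSym.eq_zero_iff p a).mpr ha]
  · exact (norm_legendreSym_of_ne_zero p ha).le

lemma feketePolynomial_coeff (n : ℕ) :
    (feketePolynomial p).coeff n = if n < p then (legendreSym p n : ℂ) else 0 := by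
  simp [feketePolynomial, finsetSum_coeff]

lemma feketePolynomial_eval (t : ℂ) :
    (feketePolynomial p).eval t = ∑ a ∈ range p, (legendreSym p a : ℂ) * t ^ a := by
  simp [feketePolynomial, eval_finsetSum]

lemma norm_feketePolynomial_coeff_le_one (n : ℕ) : ‖(feketePolynomial p).coeff n‖ ≤ 1 := by
  rw [feketePolynomial_coeff]
  split_ifs
  · exact norm_legendreSym_le_one p n
  · simp

lemma feketePolynomial_coeff_zero : (feketePolynomial p).coeff 0 = 0 := by
  simp [feketePolynomial_coeff, (Fact.out : p.Prime).pos]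

lemma feketePolynomial_coeff_one : (feketePolynomial p).coeff 1 = 1 := by
  simp [feketePolynomial_coeff, (Fact.out : p.Prime).one_lt]

lemma feketePolynomial_ne_zero : feketePolynomial p ≠ 0 := fun h => by
  simpa [h] using feketePolynomial_coeff_one p

lemma feketePolynomial_trailingCoeff : (feketePolynomial p).trailingCoeff = 1 := by
  have : (feketePolynomial p).natTrailingDegree = 1 :=
    le_antisymm (natTrailingDegree_le_of_ne_zero (by simp [feketePolynomial_coeff_one]))
      (le_natTrailingDegree (feketePolynomial_ne_zero p) fun m hm => by
        rw [Nat.lt_one_iff.mp hm, feketePolynomial_coeff_zero])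
  rw [trailingCoeff, this, feketePolynomial_coeff_one]

lemma norm_feketePolynomial_leadingCoeff : ‖(feketePolynomial p).leadingCoeff‖ = 1 := by
  have hp := (Fact.out : p.Prime).one_lt
  have hlast : (((p - 1 : ℕ) : ℤ) : ZMod p) ≠ 0 := by
    rw [Int.cast_natCast, Ne, ZMod.natCast_eq_zero_iff]
    exact fun hdvd => by have := Nat.le_of_dvd (by omega) hdvd; omega
  have hcoeff : ‖(feketePolynomial p).coeff (p - 1)‖ = 1 := by
    rw [feketePolynomial_coeff, if_pos (by omega)]
    exact norm_legendreSym_of_ne_zero p hlast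
  have hdeg : (feketePolynomial p).natDegree = p - 1 := by
    refine natDegree_eq_of_le_of_coeff_ne_zero ?_ (norm_ne_zero_iff.mp (by simp [hcoeff]))
    exact natDegree_le_iff_coeff_eq_zero.mpr fun N hN => by
      rw [feketePolynomial_coeff, if_neg (by omega)]
  rwa [leadingCoeff, hdeg]

end Fekete

theorem fekete_zeros_in_annulus_general (p : ℕ) [Fact p.Prime] (t : ℂ) (ht : t ≠ 0)
    (hz : (∑ a ∈ Finset.range p, (legendreSym p (a : ℤ) : ℂ) * t ^ a) = 0) :
    1 / 2 < ‖t‖ ∧ ‖t‖ < 2 := by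
  have hroot : (feketePolynomial p).IsRoot t := by rwa [IsRoot, feketePolynomial_eval]
  constructor
  · refine hroot.one_half_lt_norm (feketePolynomial_ne_zero p) (fun i => ?_) ht
    simpa [feketePolynomial_trailingCoeff] using norm_feketePolynomial_coeff_le_one p i
  · refine hroot.norm_lt_two (feketePolynomial_ne_zero p) (fun i => ?_)
    simpa [norm_feketePolynomial_leadingCoeff] using norm_feketePolynomial_coeff_le_one p i

/-- For an odd prime `p`, every nonzero complex zero of the Fekete polynomial
lies in the annulus `1/2 < |t| < 2`. -/
theorem fekete_zeros_in_annulus (p : ℕ) [Fact p.Prime] (hp : p ≠ 2) (t : ℂ) (ht : t ≠ 0)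
    (hz : (∑ a ∈ Finset.range p, (legendreSym p (a : ℤ) : ℂ) * t ^ a) = 0) :
    1 / 2 < ‖t‖ ∧ ‖t‖ < 2 :=
  fekete_zeros_in_annulus_general p t ht hz
end

section
/- For every integer p ≥ 2, Σ_{k=1}^{p-1} 1/sin²(πk/p) = (p² - 1)/3. -/
/-!
With `ζ = exp (2iθ)`, `1 / sin² θ = -4ζ / (ζ - 1)²`, so the sum is `-4 Σ_{k=1}^{p-1} ζ^k / (ζ^k - 1)²`
for the primitive root `ζ = exp (2πi / p)`. For a `p`-th root of unity `x ≠ 1`,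
`x / (x - 1)² = (2p)⁻¹ Σ_{j<p} j (p - j) x^j`, and `Σ_{k=1}^{p-1} ζ^{jk} = -1` for `0 < j < p`,
so the sum collapses to `-4 · (-(2p)⁻¹) Σ_{j<p} j (p - j) = (p² - 1) / 3`.
-/

open Finset

section CommRing

variable {R : Type*} [CommRing R]

theorem sum_range_succ_mul_sub_mul (f : ℕ → R) (n : ℕ) :
    ∑ j ∈ range (n + 1), (j : R) * ((n + 1 : ℕ) - j) * f j =
      ∑ j ∈ range n, (j : R) * (n - j) * f j + ∑ j ∈ range (n + 1), (j : R) * f j := by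
  rw [sum_range_succ _ n, sum_range_succ (fun j ↦ (j : R) * f j) n, ← add_assoc,
    ← sum_add_distrib]
  push_cast
  congr 1
  · exact sum_congr rfl fun j _ ↦ by ring
  · ring

theorem sum_range_cast_mul_two (n : ℕ) : (∑ j ∈ range n, (j : R)) * 2 = n * (n - 1) := by
  induction n with
  | zero => simp
  | succ n ih => rw [sum_range_succ, add_mul, ih]; push_cast; ring

theorem sum_range_mul_sub_mul_six (n : ℕ) :
    (∑ j ∈ range n, (j : R) * (n - j)) * 6 = n * (n ^ 2 - 1) := by
  induction n with
  | zero => simp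
  | succ n ih =>
    have h := sum_range_succ_mul_sub_mul (fun _ ↦ (1 : R)) n
    simp only [mul_one] at h
    have h2 := sum_range_cast_mul_two (R := R) (n + 1)
    rw [h]
    push_cast at h2 ⊢
    linear_combination ih + 3 * h2

theorem sum_range_mul_pow_mul_sub_one_sq (x : R) (n : ℕ) :
    (∑ j ∈ range n, (j : R) * x ^ j) * (x - 1) ^ 2 = ((n - 1) * x - n) * x ^ n + x := by
  induction n with
  | zero => simp
  | succ n ih => rw [sum_range_succ, add_mul, ih]; push_cast; ring

theorem sum_range_mul_sub_mul_pow_mul_sub_one_cube (x : R) (n : ℕ) :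
    (∑ j ∈ range n, (j : R) * (n - j) * x ^ j) * (x - 1) ^ 3 =
      x ^ (n + 1) * ((n - 1) * x - (n + 1)) + x * ((n + 1) * x - (n - 1)) := by
  induction n with
  | zero => simp only [range_zero, sum_empty, zero_mul, zero_add, pow_one]; ring
  | succ n ih =>
    have h1 := sum_range_mul_pow_mul_sub_one_sq x (n + 1)
    rw [sum_range_succ_mul_sub_mul, add_mul, ih]
    push_cast at h1 ⊢
    linear_combination (x - 1) * h1

end CommRing

section Field

variable {K : Type*} [Field K]

theorem sum_range_mul_sub_mul_pow_of_pow_eq_one {x : K} {n : ℕ} (hxn : x ^ n = 1) (hx : x ≠ 1) :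
    ∑ j ∈ range n, (j : K) * (n - j) * x ^ j = 2 * n * x / (x - 1) ^ 2 := by
  have hx' : x - 1 ≠ 0 := sub_ne_zero.mpr hx
  have h := sum_range_mul_sub_mul_pow_mul_sub_one_cube x n
  rw [pow_succ x n, hxn] at h
  rw [eq_div_iff (pow_ne_zero 2 hx')]
  apply mul_right_cancel₀ hx'
  linear_combination h

theorem sum_Ico_one_pow_of_pow_eq_one {x : K} {n : ℕ} (hn : n ≠ 0) (hxn : x ^ n = 1)
    (hx : x ≠ 1) : ∑ k ∈ Ico 1 n, x ^ k = -1 := by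
  have h := sum_range_eq_add_Ico (fun k ↦ x ^ k) (Nat.pos_of_ne_zero hn)
  rw [geom_sum_eq hx, hxn, sub_self, zero_div, pow_zero] at h
  linear_combination -h

theorem IsPrimitiveRoot.sum_Ico_pow_div_pow_sub_one_sq [CharZero K] {ζ : K} {n : ℕ}
    (hζ : IsPrimitiveRoot ζ n) (hn : n ≠ 0) :
    ∑ k ∈ Ico 1 n, ζ ^ k / (ζ ^ k - 1) ^ 2 = (1 - (n : K) ^ 2) / 12 := by
  have hroot : ∀ k ∈ Ico 1 n, (ζ ^ k) ^ n = 1 ∧ ζ ^ k ≠ 1 := fun k hk ↦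
    ⟨by rw [pow_right_comm, hζ.pow_eq_one, one_pow],
      hζ.pow_ne_one_of_pos_of_lt (by grind) (mem_Ico.mp hk).2⟩
  have hn' : (n : K) ≠ 0 := Nat.cast_ne_zero.mpr hn
  calc ∑ k ∈ Ico 1 n, ζ ^ k / (ζ ^ k - 1) ^ 2
      = ∑ k ∈ Ico 1 n, (2 * (n : K))⁻¹ * ∑ j ∈ range n, (j : K) * (n - j) * (ζ ^ k) ^ j := by
        refine sum_congr rfl fun k hk ↦ ?_
        rw [sum_range_mul_sub_mul_pow_of_pow_eq_one (hroot k hk).1 (hroot k hk).2]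
        field_simp
    _ = (2 * (n : K))⁻¹ * ∑ j ∈ range n, (j : K) * (n - j) * ∑ k ∈ Ico 1 n, (ζ ^ j) ^ k := by
        simp only [← mul_sum, sum_comm (s := Ico 1 n), pow_right_comm ζ]
    _ = (2 * (n : K))⁻¹ * ∑ j ∈ range n, -((j : K) * (n - j)) := by
        congr 1
        refine sum_congr rfl fun j hj ↦ ?_
        rcases Nat.eq_zero_or_pos j with rfl | hj0
        · simp
        · have hjI : j ∈ Ico 1 n := mem_Ico.mpr ⟨hj0, mem_range.mp hj⟩
          rw [sum_Ico_one_pow_of_pow_eq_one hn (hroot j hjI).1 (hroot j hjI).2, mul_neg_one]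
    _ = (1 - (n : K) ^ 2) / 12 := by
        have hsum : ∑ j ∈ range n, (j : K) * (n - j) = n * (n ^ 2 - 1) / 6 :=
          eq_div_of_mul_eq (by norm_num) (sum_range_mul_sub_mul_six n)
        rw [sum_neg_distrib, hsum]
        field_simp
        ring

end Field

theorem Complex.sin_sq_eq_neg_exp_sub_one_sq_div (z : ℂ) :
    sin z ^ 2 = -(exp (2 * z * I) - 1) ^ 2 / (4 * exp (2 * z * I)) := by
  rw [sin, neg_mul, exp_neg, show 2 * z * I = z * I + z * I by ring, exp_add]
  have he : exp (z * I) ≠ 0 := exp_ne_zero _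
  field_simp
  ring_nf
  rw [I_sq]
  ring

/-- For every integer `p ≥ 2`, `Σ_{k=1}^{p-1} 1 / sin²(πk/p) = (p² - 1)/3`. -/
theorem sum_inv_sin_sq (p : ℕ) (hp : 2 ≤ p) :
    (∑ k ∈ Finset.Ico 1 p, 1 / Real.sin (Real.pi * k / p) ^ 2) = ((p : ℝ) ^ 2 - 1) / 3 := by
  have hp0 : p ≠ 0 := by omega
  set ζ : ℂ := Complex.exp (2 * Real.pi * Complex.I / p) with hζ_def
  have hζ : IsPrimitiveRoot ζ p := Complex.isPrimitiveRoot_exp p hp0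
  have hterm (k : ℕ) :
      ((1 / Real.sin (Real.pi * k / p) ^ 2 : ℝ) : ℂ) = -4 * (ζ ^ k / (ζ ^ k - 1) ^ 2) := by
    push_cast
    rw [Complex.sin_sq_eq_neg_exp_sub_one_sq_div, hζ_def, ← Complex.exp_nat_mul]
    field_simp
  apply Complex.ofReal_injective
  push_cast [hterm, ← mul_sum, hζ.sum_Ico_pow_div_pow_sub_one_sq hp0]
  ring
end

section
/- Let J ≥ 2 and g(x) = 1/x + 1/(1-x) + Σ_{|j|<J, j≠0,-1} δ_j/(x+j) with each δ_j ∈ {-1,1}. Then for every x ∈ (0,1), g''(x) > 0; in particular g is strictly convex on (0,1). -/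
/-!
Writing `1 / (1 - x) = -1 / (x - 1)`, the function is `∑ ε j / (x + j)` over its poles, with
`ε 0 = 1` and `ε (-1) = -1`, so its second derivative is `2 ∑ ε j / (x + j) ^ 3`. The two poles
nearest to `(0, 1)` contribute `x⁻³ + (1 - x)⁻³`. Every other pole satisfies `|x + j| > 1`, and
`t⁻³ ≤ (t - 1)⁻¹ - t⁻¹` for `t > 1`; these bounds telescope to at most `x⁻¹` over the poles
`j ≥ 1` and to at most `(1 - x)⁻¹` over the poles `j ≤ -2`. Since `x⁻¹ < x⁻³` and
`(1 - x)⁻¹ < (1 - x)⁻³` on `(0, 1)`, the signed remaining terms cannot cancel the two nearest ones.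
-/

open Finset Filter Topology

theorem hasDerivAt_div_add_pow (c a : ℝ) (n : ℕ) {x : ℝ} (hx : x + a ≠ 0) :
    HasDerivAt (fun y => c / (y + a) ^ n) (-(n * c) / (x + a) ^ (n + 1)) x := by
  refine ((hasDerivAt_const x c).fun_div (((hasDerivAt_id' x).add_const a).fun_pow n)
    (pow_ne_zero n hx)).congr_deriv ?_
  rcases n with _ | n
  · simp
  · rw [Nat.add_sub_cancel]
    field_simp
    ring

section RationalFunction

variable {ι : Type*} (s : Finset ι) (c a : ι → ℝ)

theorem hasDerivAt_sum_div_add_pow (n : ℕ) {x : ℝ} (hx : ∀ i ∈ s, x + a i ≠ 0) :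
    HasDerivAt (fun y => ∑ i ∈ s, c i / (y + a i) ^ n)
      (∑ i ∈ s, -(n * c i) / (x + a i) ^ (n + 1)) x :=
  HasDerivAt.fun_sum fun i hi => hasDerivAt_div_add_pow (c i) (a i) n (hx i hi)

theorem iteratedDeriv_two_sum_div_add {x : ℝ} (hx : ∀ i ∈ s, x + a i ≠ 0) :
    iteratedDeriv 2 (fun y => ∑ i ∈ s, c i / (y + a i)) x = ∑ i ∈ s, 2 * c i / (x + a i) ^ 3 := by
  have hnear : ∀ᶠ y in 𝓝 x, ∀ i ∈ s, y + a i ≠ 0 :=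
    (eventually_all_finset s).2 fun i hi =>
      ((continuous_id.add continuous_const).continuousAt).eventually_ne (hx i hi)
  have hderiv : deriv (fun y => ∑ i ∈ s, c i / (y + a i)) =ᶠ[𝓝 x]
      fun y => ∑ i ∈ s, -c i / (y + a i) ^ 2 :=
    hnear.mono fun y hy => by simpa using (hasDerivAt_sum_div_add_pow s c a 1 hy).deriv
  rw [iteratedDeriv_succ, iteratedDeriv_one, hderiv.deriv_eq]
  convert (hasDerivAt_sum_div_add_pow s (fun i => -c i) a 2 hx).deriv using 2 with i
  push_cast
  ring

theorem continuousAt_sum_div_add {x : ℝ} (hx : ∀ i ∈ s, x + a i ≠ 0) :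
    ContinuousAt (fun y => ∑ i ∈ s, c i / (y + a i)) x := by
  simpa using (hasDerivAt_sum_div_add_pow s c a 1 hx).continuousAt

end RationalFunction

theorem inv_pow_three_le_inv_sub_one_sub_inv {t : ℝ} (ht : 1 < t) :
    (t ^ 3)⁻¹ ≤ (t - 1)⁻¹ - t⁻¹ := by
  have ht1 : 0 < t - 1 := sub_pos.2 ht
  rw [inv_sub_inv (by positivity) (by positivity), inv_eq_one_div,
    div_le_div_iff₀ (by positivity) (by positivity)]
  nlinarith [mul_le_mul_of_nonneg_left ht.le (sq_nonneg t)]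

theorem sum_inv_add_intCast_pow_three_le_sub {a : ℝ} (ha : 0 < a) {P : Finset ℤ} {M : ℤ}
    (hM : 0 ≤ M) (hP : ∀ j ∈ P, 0 < j ∧ j ≤ M) :
    ∑ j ∈ P, ((a + j) ^ 3)⁻¹ ≤ a⁻¹ - (a + M)⁻¹ := by
  induction P using Finset.induction_on_max generalizing M with
  | empty =>
    have : (0 : ℝ) ≤ M := by exact_mod_cast hM
    simpa using inv_anti₀ ha (by linarith)
  | insert m P hlt ih =>
    obtain ⟨hm, hmM⟩ := hP m (mem_insert_self m P)
    have hm' : (1 : ℝ) ≤ m := by exact_mod_cast hm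
    have hmM' : (m : ℝ) ≤ M := by exact_mod_cast hmM
    have hP' : ∑ j ∈ P, ((a + j) ^ 3)⁻¹ ≤ a⁻¹ - (a + m - 1)⁻¹ := by
      have := ih (M := m - 1) (by omega)
        fun j hj => ⟨(hP j (mem_insert_of_mem hj)).1, by linarith [hlt j hj]⟩
      rwa [Int.cast_sub, Int.cast_one, ← add_sub_assoc] at this
    have hstep := inv_pow_three_le_inv_sub_one_sub_inv (t := a + m) (by linarith)
    have hmono : (a + M)⁻¹ ≤ (a + m)⁻¹ := inv_anti₀ (by linarith) (by linarith)
    rw [sum_insert fun h => (hlt m h).false]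
    linarith

theorem sum_inv_add_intCast_pow_three_le {a : ℝ} (ha : 0 < a) {P : Finset ℤ}
    (hP : ∀ j ∈ P, 0 < j) : ∑ j ∈ P, ((a + j) ^ 3)⁻¹ ≤ a⁻¹ := by
  obtain ⟨M, hM⟩ := P.bddAbove
  have h := sum_inv_add_intCast_pow_three_le_sub ha (le_max_right M 0)
    fun j hj => ⟨hP j hj, le_max_of_le_left (hM hj)⟩
  have hM0 : (0 : ℝ) ≤ ((max M 0 : ℤ) : ℝ) := by exact_mod_cast le_max_right M 0
  linarith [inv_nonneg.2 (add_nonneg ha.le hM0)]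

theorem sum_inv_abs_add_intCast_pow_three_le {x : ℝ} (hx0 : 0 < x) (hx1 : x < 1) {S : Finset ℤ}
    (hS : ∀ j ∈ S, j ≠ 0 ∧ j ≠ -1) : ∑ j ∈ S, (|x + j| ^ 3)⁻¹ ≤ x⁻¹ + (1 - x)⁻¹ := by
  rw [← sum_filter_add_sum_filter_not S (0 < ·)]
  gcongr ?_ + ?_
  · calc ∑ j ∈ S with 0 < j, (|x + j| ^ 3)⁻¹ = ∑ j ∈ S with 0 < j, ((x + j) ^ 3)⁻¹ :=
          sum_congr rfl fun j hj => by
            have : (0 : ℝ) < j := by exact_mod_cast (mem_filter.1 hj).2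
            rw [abs_of_pos (by linarith)]
      _ ≤ x⁻¹ := sum_inv_add_intCast_pow_three_le hx0 fun j hj => (mem_filter.1 hj).2
  · -- reflecting `j ↦ -1 - j` turns the poles left of `0` into poles right of `1`
    let e := Equiv.subLeft (-1 : ℤ)
    have hneg : ∀ j ∈ S.filter (¬0 < ·), j ≤ -2 := fun j hj => by
      obtain ⟨hjS, hj⟩ := mem_filter.1 hj
      have := hS j hjS
      omega
    calc ∑ j ∈ S with ¬0 < j, (|x + j| ^ 3)⁻¹
          = ∑ j ∈ S with ¬0 < j, ((1 - x + e j) ^ 3)⁻¹ :=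
          sum_congr rfl fun j hj => by
            have : (j : ℝ) ≤ -2 := by exact_mod_cast hneg j hj
            rw [abs_of_neg (by linarith)]
            simp only [e, Equiv.subLeft_apply, Int.cast_sub, Int.cast_neg, Int.cast_one]
            ring
      _ = ∑ k ∈ (S.filter (¬0 < ·)).map e.toEmbedding, ((1 - x + k) ^ 3)⁻¹ := by
          rw [sum_map]; rfl
      _ ≤ (1 - x)⁻¹ := sum_inv_add_intCast_pow_three_le (sub_pos.2 hx1) <|
          forall_mem_map.2 fun j hj => show 0 < -1 - j by linarith [hneg j hj]

theorem inv_pow_three_add_inv_pow_three_add_sum_pos {x : ℝ} (hx0 : 0 < x) (hx1 : x < 1)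
    {S : Finset ℤ} (hS : ∀ j ∈ S, j ≠ 0 ∧ j ≠ -1) {δ : ℤ → ℝ} (hδ : ∀ j ∈ S, |δ j| ≤ 1) :
    0 < (x ^ 3)⁻¹ + ((1 - x) ^ 3)⁻¹ + ∑ j ∈ S, δ j / (x + j) ^ 3 := by
  have hsum : -(x⁻¹ + (1 - x)⁻¹) ≤ ∑ j ∈ S, δ j / (x + j) ^ 3 :=
    calc -(x⁻¹ + (1 - x)⁻¹) ≤ ∑ j ∈ S, -(|x + j| ^ 3)⁻¹ := by
          rw [sum_neg_distrib]
          exact neg_le_neg (sum_inv_abs_add_intCast_pow_three_le hx0 hx1 hS)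
      _ ≤ ∑ j ∈ S, δ j / (x + j) ^ 3 := sum_le_sum fun j hj => neg_le_of_abs_le <| by
          rw [abs_div, abs_pow, div_eq_mul_inv]
          exact mul_le_of_le_one_left (by positivity) (hδ j hj)
  have hx1' : 0 < 1 - x := sub_pos.2 hx1
  have h0 := inv_strictAnti₀ (pow_pos hx0 3) (pow_lt_self_of_lt_one₀ hx0 hx1 (by norm_num))
  have h1 := inv_strictAnti₀ (pow_pos hx1' 3)
    (pow_lt_self_of_lt_one₀ hx1' (by linarith) (by norm_num))
  linarith

theorem add_intCast_ne_zero {x : ℝ} (hx0 : 0 < x) (hx1 : x < 1) (j : ℤ) : x + j ≠ 0 := by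
  intro h
  have h0 : ((0 : ℤ) : ℝ) < (-j : ℤ) := by push_cast; linarith
  have h1 : ((-j : ℤ) : ℝ) < (1 : ℤ) := by push_cast; linarith
  norm_cast at h0 h1
  omega

noncomputable def signedPoleSum (S : Finset ℤ) (δ : ℤ → ℝ) (x : ℝ) : ℝ :=
  1 / x + 1 / (1 - x) + ∑ j ∈ S, δ j / (x + j)

def extendedSigns (δ : ℤ → ℝ) : ℤ → ℝ :=
  Function.update (Function.update δ 0 1) (-1) (-1)

section SignedPoleSum

variable {S : Finset ℤ} (δ : ℤ → ℝ)

theorem sum_insert_zero_insert_neg_one_extendedSigns_mul (hS : ∀ j ∈ S, j ≠ 0 ∧ j ≠ -1)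
    (u : ℤ → ℝ) :
    ∑ j ∈ insert 0 (insert (-1) S), extendedSigns δ j * u j =
      u 0 - u (-1) + ∑ j ∈ S, δ j * u j := by
  have h0 : (0 : ℤ) ∉ insert (-1) S := by simpa using fun h => (hS 0 h).1 rfl
  have h1 : (-1 : ℤ) ∉ S := fun h => (hS (-1) h).2 rfl
  have hδ : ∀ j ∈ S, extendedSigns δ j = δ j := fun j hj => by
    simp [extendedSigns, (hS j hj).1, (hS j hj).2]
  rw [sum_insert h0, sum_insert h1, sum_congr rfl fun j hj => by rw [hδ j hj]]
  simp only [extendedSigns, Function.update_self,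
    Function.update_of_ne (by norm_num : (0 : ℤ) ≠ -1)]
  ring

theorem signedPoleSum_eq_sum (hS : ∀ j ∈ S, j ≠ 0 ∧ j ≠ -1) :
    signedPoleSum S δ = fun y => ∑ j ∈ insert 0 (insert (-1) S), extendedSigns δ j / (y + j) := by
  funext y
  have : y + ((-1 : ℤ) : ℝ) = -(1 - y) := by push_cast; ring
  simp only [signedPoleSum, div_eq_mul_inv, sum_insert_zero_insert_neg_one_extendedSigns_mul δ hS,
    this, inv_neg, Int.cast_zero, add_zero]
  ring

theorem iteratedDeriv_two_signedPoleSum (hS : ∀ j ∈ S, j ≠ 0 ∧ j ≠ -1) {x : ℝ} (hx0 : 0 < x)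
    (hx1 : x < 1) :
    iteratedDeriv 2 (signedPoleSum S δ) x =
      2 * ((x ^ 3)⁻¹ + ((1 - x) ^ 3)⁻¹ + ∑ j ∈ S, δ j / (x + j) ^ 3) := by
  rw [signedPoleSum_eq_sum δ hS,
    iteratedDeriv_two_sum_div_add _ _ _ fun j _ => add_intCast_ne_zero hx0 hx1 j]
  have : x + ((-1 : ℤ) : ℝ) = -(1 - x) := by push_cast; ring
  simp only [div_eq_mul_inv, mul_assoc, ← mul_sum,
    sum_insert_zero_insert_neg_one_extendedSigns_mul δ hS, this, Odd.neg_pow (by decide : Odd 3),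
    inv_neg, Int.cast_zero, add_zero]
  ring

theorem continuousOn_signedPoleSum (hS : ∀ j ∈ S, j ≠ 0 ∧ j ≠ -1) :
    ContinuousOn (signedPoleSum S δ) (Set.Ioo 0 1) := fun x hx => by
  rw [signedPoleSum_eq_sum δ hS]
  exact (continuousAt_sum_div_add _ _ _ fun j _ =>
    add_intCast_ne_zero hx.1 hx.2 j).continuousWithinAt

end SignedPoleSum

theorem random_rational_fn_convex_general (J : ℕ) (δ : ℤ → ℝ)
    (hδ : ∀ j : ℤ, δ j = 1 ∨ δ j = -1) :
    (∀ x ∈ Set.Ioo (0 : ℝ) 1,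
      0 < iteratedDeriv 2 (fun x : ℝ => 1 / x + 1 / (1 - x) +
        ∑ j ∈ (Finset.Ioo (-(J : ℤ)) J).filter (fun j => j ≠ 0 ∧ j ≠ -1),
          δ j / (x + j)) x) ∧
    StrictConvexOn ℝ (Set.Ioo (0 : ℝ) 1) (fun x : ℝ => 1 / x + 1 / (1 - x) +
        ∑ j ∈ (Finset.Ioo (-(J : ℤ)) J).filter (fun j => j ≠ 0 ∧ j ≠ -1),
          δ j / (x + j)) := by
  set S := (Finset.Ioo (-(J : ℤ)) J).filter (fun j => j ≠ 0 ∧ j ≠ -1)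
  have hS : ∀ j ∈ S, j ≠ 0 ∧ j ≠ -1 := fun j hj => (mem_filter.1 hj).2
  have hδ' : ∀ j ∈ S, |δ j| ≤ 1 := fun j _ => by rcases hδ j with h | h <;> simp [h]
  have hpos : ∀ x ∈ Set.Ioo (0 : ℝ) 1, 0 < iteratedDeriv 2 (signedPoleSum S δ) x :=
    fun x ⟨hx0, hx1⟩ => by
      rw [iteratedDeriv_two_signedPoleSum δ hS hx0 hx1]
      exact mul_pos two_pos (inv_pow_three_add_inv_pow_three_add_sum_pos hx0 hx1 hS hδ')
  refine ⟨hpos, strictConvexOn_of_deriv2_pos (convex_Ioo 0 1) (continuousOn_signedPoleSum δ hS) ?_⟩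
  rw [interior_Ioo, ← iteratedDeriv_eq_iterate]
  exact hpos

/-- Let `J ≥ 2` and `g(x) = 1/x + 1/(1-x) + Σ_{|j|<J, j≠0,-1} δ_j/(x+j)` with each
`δ_j ∈ {±1}`. Then `g'' > 0` on `(0,1)`; in particular `g` is strictly convex there. -/
theorem random_rational_fn_convex (J : ℕ) (hJ : 2 ≤ J) (δ : ℤ → ℝ)
    (hδ : ∀ j : ℤ, δ j = 1 ∨ δ j = -1) :
    (∀ x ∈ Set.Ioo (0 : ℝ) 1,
      0 < iteratedDeriv 2 (fun x : ℝ => 1 / x + 1 / (1 - x) +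
        ∑ j ∈ (Finset.Ioo (-(J : ℤ)) J).filter (fun j => j ≠ 0 ∧ j ≠ -1),
          δ j / (x + j)) x) ∧
    StrictConvexOn ℝ (Set.Ioo (0 : ℝ) 1) (fun x : ℝ => 1 / x + 1 / (1 - x) +
        ∑ j ∈ (Finset.Ioo (-(J : ℤ)) J).filter (fun j => j ≠ 0 ∧ j ≠ -1),
          δ j / (x + j)) :=
  random_rational_fn_convex_general J δ hδ
end

section
/- Let g(x) = 1/x + 1/(1-x) + Σ_{|j|<J, j≠0,-1} δ_j/(x+j) with δ_j ∈ {-1,1}. If 0 < t < 1/π then g'(t) < 0, and if 1 - 1/π < t < 1 then g'(t) > 0. Hence any critical point x₀ of g in (0,1) lies in [1/π, 1 - 1/π]. -/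
/-!
Write `g'(t) = 1/(1-t)² - 1/t² - Σ_j δ_j/(t+j)²`. For `t ∈ (0,1)` the terms with `j ≥ 1` satisfy
`(t+j)² ≥ j²` and those with `j ≤ -2` satisfy `(t+j)² ≥ (j+1)²`, so each half of the sum is at
most `ζ(2) = π²/6` and `|g'(t) - (1/(1-t)² - 1/t²)| ≤ π²/3`. If `t < 1/π < 1/2` then
`1/t² > π²` and `1/(1-t)² < 4`, so `g'(t) < 4 - 2π²/3 < 0`; the case `1 - t < 1/π` is symmetric.
-/

open Real Finset

lemma sum_one_div_sq_le_pi_sq_div_six (s : Finset ℕ) :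
    ∑ n ∈ s, 1 / (n : ℝ) ^ 2 ≤ π ^ 2 / 6 :=
  sum_le_hasSum s (fun n _ => by positivity) hasSum_zeta_two

lemma sum_one_div_add_sq_le_of_pos {s : Finset ℤ} (hs : ∀ j ∈ s, 0 < j) {t : ℝ} (ht : 0 ≤ t) :
    ∑ j ∈ s, 1 / (t + j) ^ 2 ≤ π ^ 2 / 6 := by
  have hinj : Set.InjOn Int.toNat s := fun a ha b hb h => by
    have := hs a ha; have := hs b hb; omega
  calc ∑ j ∈ s, 1 / (t + j) ^ 2 ≤ ∑ j ∈ s, 1 / ((j.toNat : ℕ) : ℝ) ^ 2 := by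
        refine sum_le_sum fun j hj => ?_
        have hj' : ((j.toNat : ℕ) : ℝ) = j := by exact_mod_cast Int.toNat_of_nonneg (hs j hj).le
        have hj0 : (0 : ℝ) < j := by exact_mod_cast hs j hj
        rw [hj']
        gcongr
        linarith
    _ = ∑ n ∈ s.image Int.toNat, 1 / (n : ℝ) ^ 2 := by rw [sum_image hinj]
    _ ≤ π ^ 2 / 6 := sum_one_div_sq_le_pi_sq_div_six _

lemma sum_one_div_add_sq_le_of_le_neg_two {s : Finset ℤ} (hs : ∀ j ∈ s, j ≤ -2) {t : ℝ}
    (ht : t ≤ 1) : ∑ j ∈ s, 1 / (t + j) ^ 2 ≤ π ^ 2 / 6 := by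
  have hinj : Set.InjOn (fun j : ℤ => -j - 1) s := fun a _ b _ h => by
    simp only at h; omega
  have hpos : ∀ k ∈ s.image (fun j : ℤ => -j - 1), 0 < k := by
    simp only [mem_image]
    rintro _ ⟨j, hj, rfl⟩
    linarith [hs j hj]
  -- the reflection `t + j = -((1 - t) + (-j - 1))` maps these terms to the case `j > 0`
  calc ∑ j ∈ s, 1 / (t + j) ^ 2 = ∑ k ∈ s.image (fun j : ℤ => -j - 1), 1 / ((1 - t) + k) ^ 2 := by
        rw [sum_image hinj]
        refine sum_congr rfl fun j _ => ?_
        push_cast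
        ring
    _ ≤ π ^ 2 / 6 := sum_one_div_add_sq_le_of_pos hpos (by linarith)

lemma sum_one_div_add_sq_le {s : Finset ℤ} (hs : ∀ j ∈ s, j ≠ 0 ∧ j ≠ -1) {t : ℝ}
    (ht₀ : 0 ≤ t) (ht₁ : t ≤ 1) : ∑ j ∈ s, 1 / (t + j) ^ 2 ≤ π ^ 2 / 3 := by
  rw [← sum_filter_add_sum_filter_not s (0 < ·)]
  have hpos := sum_one_div_add_sq_le_of_pos (s := s.filter (0 < ·))
    (fun j hj => (mem_filter.1 hj).2) ht₀
  have hneg := sum_one_div_add_sq_le_of_le_neg_two (s := s.filter (¬ 0 < ·))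
    (fun j hj => by have := hs j (mem_filter.1 hj).1; have := (mem_filter.1 hj).2; omega) ht₁
  linarith

lemma abs_sum_div_add_sq_le {s : Finset ℤ} (hs : ∀ j ∈ s, j ≠ 0 ∧ j ≠ -1) {δ : ℤ → ℝ}
    (hδ : ∀ j ∈ s, |δ j| ≤ 1) {t : ℝ} (ht₀ : 0 ≤ t) (ht₁ : t ≤ 1) :
    |∑ j ∈ s, δ j / (t + j) ^ 2| ≤ π ^ 2 / 3 := by
  refine (abs_sum_le_sum_abs _ _).trans
    ((sum_le_sum fun j hj => ?_).trans (sum_one_div_add_sq_le hs ht₀ ht₁))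
  rw [abs_div, abs_of_nonneg (sq_nonneg (t + j))]
  exact div_le_div_of_nonneg_right (hδ j hj) (sq_nonneg _)

lemma add_intCast_ne_zero_s15 {t : ℝ} (ht₀ : 0 < t) (ht₁ : t < 1) {j : ℤ} (hj : j ≠ 0 ∧ j ≠ -1) :
    t + j ≠ 0 := by
  rcases (by omega : 1 ≤ j ∨ j ≤ -2) with h | h
  · have : (1 : ℝ) ≤ j := by exact_mod_cast h
    linarith
  · have : (j : ℝ) ≤ -2 := by exact_mod_cast h
    linarith

lemma hasDerivAt_one_div_add_one_div_one_sub_add_sum {s : Finset ℤ} (δ : ℤ → ℝ) {t : ℝ}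
    (ht₀ : t ≠ 0) (ht₁ : 1 - t ≠ 0) (hs : ∀ j ∈ s, t + j ≠ 0) :
    HasDerivAt (fun x : ℝ => 1 / x + 1 / (1 - x) + ∑ j ∈ s, δ j / (x + j))
      (1 / (1 - t) ^ 2 - 1 / t ^ 2 - ∑ j ∈ s, δ j / (t + j) ^ 2) t := by
  have h₁ : HasDerivAt (fun x : ℝ => 1 / x) (-(1 / t ^ 2)) t := by
    simpa only [one_div] using hasDerivAt_inv ht₀
  have h₂ : HasDerivAt (fun x : ℝ => 1 / (1 - x)) (1 / (1 - t) ^ 2) t := by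
    simpa [one_div] using ((hasDerivAt_id t).const_sub 1).fun_inv ht₁
  have h₃ : HasDerivAt (fun x : ℝ => ∑ j ∈ s, δ j / (x + j)) (∑ j ∈ s, -(δ j / (t + j) ^ 2)) t :=
    HasDerivAt.fun_sum fun j hj => by
      simpa [div_eq_mul_inv, neg_div] using
        (((hasDerivAt_id t).add_const (j : ℝ)).fun_inv (hs j hj)).const_mul (δ j)
  exact ((h₁.add h₂).add h₃).congr_deriv (by rw [sum_neg_distrib]; ring)

lemma abs_deriv_sub_le {s : Finset ℤ} (hs : ∀ j ∈ s, j ≠ 0 ∧ j ≠ -1) {δ : ℤ → ℝ}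
    (hδ : ∀ j ∈ s, |δ j| ≤ 1) {t : ℝ} (ht₀ : 0 < t) (ht₁ : t < 1) :
    |deriv (fun x : ℝ => 1 / x + 1 / (1 - x) + ∑ j ∈ s, δ j / (x + j)) t
      - (1 / (1 - t) ^ 2 - 1 / t ^ 2)| ≤ π ^ 2 / 3 := by
  rw [(hasDerivAt_one_div_add_one_div_one_sub_add_sum δ ht₀.ne' (by linarith)
    fun j hj => add_intCast_ne_zero_s15 ht₀ ht₁ (hs j hj)).deriv, sub_sub_cancel_left, abs_neg]
  exact abs_sum_div_add_sq_le hs hδ ht₀.le ht₁.le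

lemma sq_lt_one_div_sq {a u : ℝ} (ha : 0 < a) (hu : 0 < u) (h : u < 1 / a) : a ^ 2 < 1 / u ^ 2 := by
  rw [← one_div_pow]
  exact pow_lt_pow_left₀ ((lt_one_div hu ha).1 h) ha.le two_ne_zero

lemma one_div_sq_lt_sq {a u : ℝ} (ha : 0 < a) (h : 1 / a < u) : 1 / u ^ 2 < a ^ 2 := by
  rw [← one_div_pow]
  have hu : 0 < u := (one_div_pos.2 ha).trans h
  exact pow_lt_pow_left₀ ((one_div_lt ha hu).1 h) (one_div_pos.2 hu).le two_ne_zero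

theorem random_rational_fn_critical_point_general (J : ℕ) (δ : ℤ → ℝ)
    (hδ : ∀ j : ℤ, δ j = 1 ∨ δ j = -1) :
    let g : ℝ → ℝ := fun x => 1 / x + 1 / (1 - x) +
      ∑ j ∈ (Finset.Ioo (-(J : ℤ)) J).filter (fun j => j ≠ 0 ∧ j ≠ -1), δ j / (x + j)
    (∀ t : ℝ, 0 < t → t < 1 / Real.pi → deriv g t < 0) ∧
    (∀ t : ℝ, 1 - 1 / Real.pi < t → t < 1 → 0 < deriv g t) ∧
    (∀ x₀ ∈ Set.Ioo (0 : ℝ) 1, deriv g x₀ = 0 →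
      x₀ ∈ Set.Icc (1 / Real.pi) (1 - 1 / Real.pi)) := by
  intro g
  have hderiv : ∀ t, 0 < t → t < 1 → |deriv g t - (1 / (1 - t) ^ 2 - 1 / t ^ 2)| ≤ π ^ 2 / 3 :=
    fun t ht₀ ht₁ => abs_deriv_sub_le (fun j hj => (mem_filter.1 hj).2)
      (fun j _ => by rcases hδ j with h | h <;> simp [h]) ht₀ ht₁
  have hπ : 6 < π ^ 2 := by nlinarith [pi_gt_three]
  have hπ₂ : 1 / π < 1 / 2 := one_div_lt_one_div_of_lt two_pos (by linarith [pi_gt_three])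
  have hneg : ∀ t : ℝ, 0 < t → t < 1 / π → deriv g t < 0 := fun t ht₀ ht => by
    have h₁ := sq_lt_one_div_sq pi_pos ht₀ ht
    have h₂ := one_div_sq_lt_sq (a := 2) two_pos (u := 1 - t) (by linarith)
    linarith [(abs_le.1 (hderiv t ht₀ (by linarith))).2]
  have hpos : ∀ t : ℝ, 1 - 1 / π < t → t < 1 → 0 < deriv g t := fun t ht ht₁ => by
    have h₁ := sq_lt_one_div_sq pi_pos (u := 1 - t) (by linarith) (by linarith)
    have h₂ := one_div_sq_lt_sq (a := 2) two_pos (u := t) (by linarith)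
    linarith [(abs_le.1 (hderiv t (by linarith) ht₁)).1]
  exact ⟨hneg, hpos, fun x hx hx₀ =>
    ⟨not_lt.1 fun h => (hneg x hx.1 h).ne hx₀, not_lt.1 fun h => (hpos x h hx.2).ne' hx₀⟩⟩

/-- With `g(x) = 1/x + 1/(1-x) + Σ_{|j|<J, j≠0,-1} δ_j/(x+j)`, `δ_j ∈ {±1}`:
`g' < 0` on `(0, 1/π)`, `g' > 0` on `(1 - 1/π, 1)`, hence any critical point of `g`
in `(0,1)` lies in `[1/π, 1 - 1/π]`. -/
theorem random_rational_fn_critical_point (J : ℕ) (hJ : 2 ≤ J) (δ : ℤ → ℝ)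
    (hδ : ∀ j : ℤ, δ j = 1 ∨ δ j = -1) :
    let g : ℝ → ℝ := fun x => 1 / x + 1 / (1 - x) +
      ∑ j ∈ (Finset.Ioo (-(J : ℤ)) J).filter (fun j => j ≠ 0 ∧ j ≠ -1), δ j / (x + j)
    (∀ t : ℝ, 0 < t → t < 1 / Real.pi → deriv g t < 0) ∧
    (∀ t : ℝ, 1 - 1 / Real.pi < t → t < 1 → 0 < deriv g t) ∧
    (∀ x₀ ∈ Set.Ioo (0 : ℝ) 1, deriv g x₀ = 0 →
      x₀ ∈ Set.Icc (1 / Real.pi) (1 - 1 / Real.pi)) :=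
  random_rational_fn_critical_point_general J δ hδ
end
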